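/- arXiv:2209.07385 — 3 statements merged into one kernel-verified Lean document; each statement's English description precedes it below -/
import Mathlib

section
/- Let f be a nonnegative integer and set m = 2f + 1. Let G₀ be the complete simple graph on m vertices, and let G₀, G₁, …, G_k be a sequence of simple graphs in which each G_{j+1} is obtained from G_j by adding one new vertex together with edges from it to an m-element set of vertices of G_j (the Graph Extension Scheme). Then the final graph G_k has vertex-connectivity at least m = 2f + 1, i.e., for every set S of vertices of G_k with |S| ≤ 2f, the subgraph of G_k induced on the complement of S is connected. -/
/-- The Graph Extension Scheme: extend a graph `G` on `V` by one new vertex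
(`none` in `Option V`) joined by edges to each vertex of the set `T`. -/
def extendGraph {V : Type*} (G : SimpleGraph V) (T : Finset V) :
    SimpleGraph (Option V) where
  Adj x y :=
    match x, y with
    | some a, some b => G.Adj a b
    | some a, none => a ∈ T
    | none, some b => b ∈ T
    | none, none => False
  symm := by
    constructor
    rintro (_ | a) (_ | b) h
    · exact h
    · exact h
    · exact h
    · exact G.adj_symm h
  loopless := by
    constructor
    rintro (_ | a) h
    · exact h
    · exact G.irrefl h

/-- The vertex type after `k` applications of the Graph Extension Scheme:
each application adds one new vertex (`none`). -/
def OptIter (V : Type) : ℕ → Type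
  | 0 => V
  | n + 1 => Option (OptIter V n)

/-!
Deleting fewer than `m` vertices from the extended graph deletes fewer than `m` old vertices,
so the old vertices that survive are connected among themselves; and since the new vertex has
`m` neighbours, at least one of them survives to attach it.
-/

namespace SimpleGraph

variable {V : Type*}

/-- Vertex-connectivity at least `m`. -/
def IsVertexConnected (G : SimpleGraph V) (m : ℕ) : Prop :=
  ∀ S : Finset V, S.card < m → (G.induce (↑S : Set V)ᶜ).Connected

theorem isVertexConnected_top [Fintype V] :
    (⊤ : SimpleGraph V).IsVertexConnected (Fintype.card V) := by
  intro S hS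
  obtain ⟨a, -, ha⟩ := Finset.exists_mem_notMem_of_card_lt_card (t := Finset.univ) hS
  have : Nonempty ((↑S : Set V)ᶜ : Set V) := ⟨⟨a, ha⟩⟩
  rw [induce_top]
  exact connected_top

def someEmbedding (G : SimpleGraph V) (T : Finset V) : G ↪g extendGraph G T where
  toEmbedding := .some
  map_rel_iff' := Iff.rfl

theorem IsVertexConnected.extendGraph {G : SimpleGraph V} {m : ℕ} (hG : G.IsVertexConnected m)
    {T : Finset V} (hT : m ≤ T.card) : (extendGraph G T).IsVertexConnected m := by
  intro S hS
  set S' := S.preimage some (Option.some_injective V).injOn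
  have hS' : S'.card < m :=
    (Finset.card_le_card_of_injOn some (fun a ha => Finset.mem_preimage.mp ha)
      (Option.some_injective V).injOn).trans_lt hS
  let φ := induceHom (s := (↑S' : Set V)ᶜ) (t := (↑S : Set (Option V))ᶜ)
    (someEmbedding G T).toHom fun a ha => show some a ∉ S by simpa [S'] using ha
  obtain ⟨_, htT', htS⟩ :=
    Finset.exists_mem_notMem_of_card_lt_card (hS.trans_le (hT.trans (T.card_map .some).ge))
  obtain ⟨t, htT, rfl⟩ := Finset.mem_map.mp htT'
  rw [connected_iff_exists_forall_reachable]
  refine ⟨⟨some t, htS⟩, ?_⟩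
  rintro ⟨_ | a, ha⟩
  · exact Adj.reachable (G := (_root_.extendGraph G T).induce _) htT
  · exact ((hG S' hS').preconnected ⟨t, by simpa [S'] using htS⟩
      ⟨a, by simpa [S'] using ha⟩).map φ

end SimpleGraph

open SimpleGraph in
theorem isVertexConnected_of_extendGraph_sequence {V : Type} {m k : ℕ}
    (G : ∀ j : ℕ, SimpleGraph (OptIter V j)) (h0 : (G 0).IsVertexConnected m)
    (hstep : ∀ j, j < k → ∃ T : Finset (OptIter V j),
      m ≤ T.card ∧ G (j + 1) = extendGraph (G j) T) :
    (G k).IsVertexConnected m := by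
  induction k with
  | zero => exact h0
  | succ n ih =>
    obtain ⟨T, hT, hG⟩ := hstep n n.lt_succ_self
    rw [hG]
    exact (ih fun j hj => hstep j (hj.trans n.lt_succ_self)).extendGraph hT

/-- **Correctness of Algorithms 2 and 3.** Let `m = 2f + 1`, let `G 0` be the
complete graph on `m` vertices, and let each `G (j+1)` (for `j < k`) be
obtained from `G j` by the Graph Extension Scheme, i.e. by adding one new
vertex joined to an `m`-element set of vertices of `G j`. Then the final
graph `G k` has vertex-connectivity at least `m = 2f + 1`: deleting any set
`S` of at most `2f` vertices leaves a connected induced subgraph. -/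
theorem graphExtensionSequence_vertexConnectivity (f k : ℕ)
    (G : ∀ j : ℕ, SimpleGraph (OptIter (Fin (2 * f + 1)) j))
    (h0 : G 0 = (⊤ : SimpleGraph (OptIter (Fin (2 * f + 1)) 0)))
    (hstep : ∀ j, j < k → ∃ T : Finset (OptIter (Fin (2 * f + 1)) j),
      T.card = 2 * f + 1 ∧ G (j + 1) = extendGraph (G j) T)
    (S : Finset (OptIter (Fin (2 * f + 1)) k)) (hS : S.card ≤ 2 * f) :
    ((G k).induce ((↑S : Set (OptIter (Fin (2 * f + 1)) k))ᶜ)).Connected := by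
  have hG0 : (G 0).IsVertexConnected (2 * f + 1) := by
    have := SimpleGraph.isVertexConnected_top (V := Fin (2 * f + 1))
    rw [Fintype.card_fin] at this
    rwa [h0]
  have hGk := isVertexConnected_of_extendGraph_sequence G hG0 fun j hj =>
    (hstep j hj).imp fun _ ⟨hT, hG⟩ => ⟨hT.ge, hG⟩
  exact hGk S (Nat.lt_succ_of_le hS)
end

section
/- Let N, p, q be natural numbers and let O be a real p × N matrix and M a real p × q matrix. If the rank of the block matrix [O M] (the p × (N + q) matrix whose first N columns are those of O and whose last q columns are those of M) equals N + rank(M), then the initial state is uniquely recoverable from the observation: for all vectors x₁, x₂ ∈ ℝ^N and u₁, u₂ ∈ ℝ^q, if O·x₁ + M·u₁ = O·x₂ + M·u₂ then x₁ = x₂. -/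
/-! The columns of `[O M]` span `range O ⊔ range M`, so by the dimension formula
`rank [O M] + dim (range O ⊓ range M) = rank O + rank M`. Since `rank O ≤ N`, the rank condition
forces `rank O = N` (the columns of `O` are independent, i.e. `x ↦ O x` is injective) and
`range O ⊓ range M = 0`. Then `O (x₁ - x₂) = M (u₂ - u₁)` lies in both ranges, hence vanishes,
and `x₁ = x₂`. -/

namespace Matrix

variable {m n n₁ n₂ R K : Type*} [Fintype n] [Fintype n₁] [Fintype n₂]

theorem range_mulVecLin_fromCols [CommSemiring R] (A : Matrix m n₁ R) (B : Matrix m n₂ R) :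
    LinearMap.range (fromCols A B).mulVecLin =
      LinearMap.range A.mulVecLin ⊔ LinearMap.range B.mulVecLin := by
  have hcols : (fromCols A B).col = Sum.elim A.col B.col := by
    ext (j | j) <;> rfl
  rw [range_mulVecLin, range_mulVecLin, range_mulVecLin, hcols, Set.Sum.elim_range,
    Submodule.span_union]

theorem mulVec_injective_iff_rank_eq_card [CommRing R] [Nontrivial R] {A : Matrix m n R} :
    Function.Injective A.mulVec ↔ A.rank = Fintype.card n := by
  rw [mulVec_injective_iff, linearIndependent_iff_card_eq_finrank_span, rank_eq_finrank_span_cols,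
    eq_comm]
  rfl

theorem rank_fromCols_add_finrank_inf [Field K] (A : Matrix m n₁ K) (B : Matrix m n₂ K) :
    (fromCols A B).rank +
        Module.finrank K ↥(LinearMap.range A.mulVecLin ⊓ LinearMap.range B.mulVecLin) =
      A.rank + B.rank := by
  rw [rank, range_mulVecLin_fromCols]
  exact Submodule.finrank_sup_add_finrank_inf_eq _ _

theorem mulVec_injective_and_disjoint_of_rank_fromCols_eq [Field K]
    {A : Matrix m n₁ K} {B : Matrix m n₂ K} (h : (fromCols A B).rank = Fintype.card n₁ + B.rank) :
    Function.Injective A.mulVec ∧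
      Disjoint (LinearMap.range A.mulVecLin) (LinearMap.range B.mulVecLin) := by
  have hdim := rank_fromCols_add_finrank_inf A B
  have hA := A.rank_le_card_width
  rw [mulVec_injective_iff_rank_eq_card, ← Submodule.finrank_eq_zero.trans disjoint_iff.symm]
  omega

theorem eq_of_mulVec_add_mulVec_eq [CommRing R] {A : Matrix m n₁ R} {B : Matrix m n₂ R}
    (hA : Function.Injective A.mulVec)
    (hAB : Disjoint (LinearMap.range A.mulVecLin) (LinearMap.range B.mulVecLin))
    {x₁ x₂ : n₁ → R} {u₁ u₂ : n₂ → R} (h : A *ᵥ x₁ + B *ᵥ u₁ = A *ᵥ x₂ + B *ᵥ u₂) :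
    x₁ = x₂ := by
  have hcommon : A *ᵥ (x₁ - x₂) = B *ᵥ (u₂ - u₁) := by
    simp only [mulVec_sub]
    linear_combination (norm := module) h
  have hzero : A *ᵥ (x₁ - x₂) = 0 :=
    Submodule.disjoint_def.mp hAB _ ⟨_, rfl⟩ (hcommon ▸ ⟨_, rfl⟩)
  exact sub_eq_zero.mp (hA (hzero.trans (mulVec_zero A).symm))

end Matrix

/-- **Unique recoverability from the rank condition (Lemma 1).** If the
block matrix `[O M]` has rank `N + rank M`, then the initial state is
uniquely recoverable from the observation: whenever
`O·x₁ + M·u₁ = O·x₂ + M·u₂`, we must have `x₁ = x₂`. -/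
theorem state_recovery_of_rank_condition (N p q : ℕ)
    (O : Matrix (Fin p) (Fin N) ℝ) (M : Matrix (Fin p) (Fin q) ℝ)
    (h : (Matrix.fromCols O M).rank = N + M.rank) :
    ∀ (x₁ x₂ : Fin N → ℝ) (u₁ u₂ : Fin q → ℝ),
      O.mulVec x₁ + M.mulVec u₁ = O.mulVec x₂ + M.mulVec u₂ → x₁ = x₂ := by
  obtain ⟨hO, hOM⟩ :=
    Matrix.mulVec_injective_and_disjoint_of_rank_fromCols_eq (h.trans (by rw [Fintype.card_fin]))
  exact fun _ _ _ _ ↦ Matrix.eq_of_mulVec_add_mulVec_eq hO hOM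
end

section
/- Let N, p, q be natural numbers, let f be a nonnegative integer, let O be a real p × N matrix and M a real p × q matrix. Suppose that for every subset Y of column indices of M with |Y| ≤ 2f, the following holds: for all x ∈ ℝ^N and u ∈ ℝ^q whose set of nonzero coordinates is contained in Y, O·x + M·u = 0 implies x = 0. Then the state is identifiable under attacks affecting at most f coordinates: for all x₁, x₂ ∈ ℝ^N and u₁, u₂ ∈ ℝ^q such that the set of nonzero coordinates of u₁ has size at most f and the set of nonzero coordinates of u₂ has size at most f, if O·x₁ + M·u₁ = O·x₂ + M·u₂ then x₁ = x₂. -/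
/-- **Identifiability under sparse attacks (Lemma 1).** Suppose that for
every set `Y` of at most `2f` column indices of `M`, the only `x` with
`O·x + M·u = 0` for some `u` supported in `Y` is `x = 0`. Then the state is
identifiable under attacks affecting at most `f` coordinates: if `u₁` and
`u₂` each have at most `f` nonzero coordinates and
`O·x₁ + M·u₁ = O·x₂ + M·u₂`, then `x₁ = x₂`. -/
theorem identifiability_of_sparse_observability (N p q f : ℕ)
    (O : Matrix (Fin p) (Fin N) ℝ) (M : Matrix (Fin p) (Fin q) ℝ)
    (h : ∀ Y : Finset (Fin q), Y.card ≤ 2 * f →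
      ∀ (x : Fin N → ℝ) (u : Fin q → ℝ), (∀ j, u j ≠ 0 → j ∈ Y) →
        O.mulVec x + M.mulVec u = 0 → x = 0) :
    ∀ (x₁ x₂ : Fin N → ℝ) (u₁ u₂ : Fin q → ℝ),
      {j | u₁ j ≠ 0}.ncard ≤ f → {j | u₂ j ≠ 0}.ncard ≤ f →
      O.mulVec x₁ + M.mulVec u₁ = O.mulVec x₂ + M.mulVec u₂ → x₁ = x₂ := by
  intro x₁ x₂ u₁ u₂ h₁ h₂ heq
  set Y : Finset (Fin q) :=
    {j | u₁ j ≠ 0}.toFinset ∪ {j | u₂ j ≠ 0}.toFinset with hY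
  have hcard : Y.card ≤ 2 * f := by
    calc Y.card ≤ {j | u₁ j ≠ 0}.toFinset.card + {j | u₂ j ≠ 0}.toFinset.card :=
          Finset.card_union_le _ _
      _ ≤ f + f := by
          gcongr
          · simpa [Set.ncard_eq_toFinset_card'] using h₁
          · simpa [Set.ncard_eq_toFinset_card'] using h₂
      _ = 2 * f := by ring
  have hsub : x₁ - x₂ = 0 := by
    apply h Y hcard (x₁ - x₂) (u₁ - u₂)
    · intro j hj
      simp only [hY, Finset.mem_union, Set.mem_toFinset, Set.mem_setOf_eq]
      by_contra hc
      push_neg at hc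
      simp [hc.1, hc.2] at hj
    · have : O.mulVec x₁ + M.mulVec u₁ - (O.mulVec x₂ + M.mulVec u₂) = 0 := by
        rw [heq]; ring
      rw [Matrix.mulVec_sub, Matrix.mulVec_sub]
      linear_combination (norm := abel) this
  exact sub_eq_zero.mp hsub
end
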